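/- arXiv:1407.5634 — 8 statements merged into one kernel-verified Lean document; each statement's English description precedes it below -/
import Mathlib

section
/- Let n ≥ 1 and ℓ, h ∈ [0,1] with ℓ < 1/n < h, and set k = ⌊(1 − n·ℓ)/(h − ℓ)⌋ and f = 1 − k·h − (n − k − 1)·ℓ. Then ℓ ≤ f ≤ h, and every extreme point of I(ℓ,h) = {p : Fin n → ℝ | (∀ i, ℓ ≤ p i ∧ p i ≤ h) ∧ ∑ i, p i = 1} is a permutation of the vector (h, …, h, ℓ, …, ℓ, f) having k entries equal to h, n − k − 1 entries equal to ℓ, and one entry equal to f. -/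
/-!
An extreme point `v` of `I(ℓ, h)` has at most one coordinate strictly between `ℓ` and `h`:
otherwise a little mass could be moved between two such coordinates in either direction.
So, with `a` coordinates equal to `h` and some coordinate `v j < h`, all remaining coordinates
equal `ℓ`, and `1 = a h + (n - a - 1) ℓ + v j` with `ℓ ≤ v j < h`. This pins `a` down as
`k = ⌊(1 - n ℓ) / (h - ℓ)⌋` and then `v j` as `f`. Hence `v` and the target vector take the
same values with the same multiplicities, so they differ by a permutation.
-/

open Finset

theorem Nat.floor_div_eq_iff {K : Type*} [Field K] [LinearOrder K] [IsStrictOrderedRing K]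
    [FloorSemiring K] {x d : K} (hx : 0 ≤ x) (hd : 0 < d) {k : ℕ} :
    ⌊x / d⌋₊ = k ↔ k * d ≤ x ∧ x < (k + 1) * d := by
  rw [Nat.floor_eq_iff (div_nonneg hx hd.le), le_div_iff₀ hd, div_lt_iff₀ hd]

theorem exists_perm_comp_eq_of_map_univ_eq {α β : Type*} [Fintype α] [DecidableEq β]
    {v w : α → β} (hvw : univ.val.map v = univ.val.map w) :
    ∃ σ : Equiv.Perm α, v ∘ σ = w := by
  have hfiber (c : β) : Fintype.card {a // w a = c} = Fintype.card {a // v a = c} := by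
    have := congrArg (Multiset.count c) hvw
    rw [Multiset.count_map, Multiset.count_map] at this
    simp only [Fintype.card_subtype, card_def, filter_val, eq_comm (b := c)]
    exact this.symm
  exact ⟨Equiv.ofFiberEquiv fun c => Fintype.equivOfCardEq (hfiber c),
    funext (Equiv.ofFiberEquiv_map _)⟩

theorem map_univ_ite_mem_ite_eq {ι β : Type*} [Fintype ι] [DecidableEq ι] {A : Finset ι} {j : ι}
    (hj : j ∉ A) (a b c : β) :
    univ.val.map (fun i => if i ∈ A then a else if i = j then c else b) =
      Multiset.replicate #A a + c ::ₘ Multiset.replicate (Fintype.card ι - #A - 1) b := by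
  have hjc : j ∈ Aᶜ := mem_compl.2 hj
  have huniv : univ.val = A.val + j ::ₘ (Aᶜ.erase j).val := by
    rw [erase_val, Multiset.cons_erase (by simpa using hjc), ← union_compl A,
      ← disjUnion_eq_union _ _ disjoint_compl_right]
    rfl
  rw [huniv, Multiset.map_add, Multiset.map_cons, if_neg hj, if_pos rfl]
  congr 2
  · rw [Multiset.map_congr (g := fun _ => a) rfl fun i (hi : i ∈ A) => if_pos hi,
      Multiset.map_const']
    rfl
  · rw [Multiset.map_congr (g := fun _ => b) rfl fun i hi => ?_, Multiset.map_const', card_val,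
      card_erase_of_mem hjc, card_compl]
    obtain ⟨hij, hiA⟩ := mem_erase.1 hi
    rw [if_neg (mem_compl.1 hiA), if_neg hij]

theorem eq_zero_of_add_mem_of_sub_mem_of_mem_extremePoints {𝕜 E : Type*} [Field 𝕜] [LinearOrder 𝕜]
    [IsStrictOrderedRing 𝕜] [AddCommGroup E] [Module 𝕜 E] {A : Set E} {x d : E}
    (hx : x ∈ A.extremePoints 𝕜) (hadd : x + d ∈ A) (hsub : x - d ∈ A) : d = 0 := by
  have hseg : x ∈ openSegment 𝕜 (x + d) (x - d) :=
    ⟨1 / 2, 1 / 2, by norm_num, by norm_num, by norm_num, by module⟩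
  simpa using hx.2 hadd hsub hseg

/-- The polytope `I(ℓ, h)`. -/
def boundedSimplex (ι : Type*) [Fintype ι] (ℓ h : ℝ) : Set (ι → ℝ) :=
  {p | (∀ i, ℓ ≤ p i ∧ p i ≤ h) ∧ ∑ i, p i = 1}

variable {ι : Type*} [Fintype ι] [DecidableEq ι] {ℓ h : ℝ}

theorem add_single_sub_single_mem_boundedSimplex {v : ι → ℝ} (hv : v ∈ boundedSimplex ι ℓ h)
    {i j : ι} (hij : i ≠ j) {δ : ℝ} (hi : ℓ ≤ v i + δ ∧ v i + δ ≤ h)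
    (hj : ℓ ≤ v j - δ ∧ v j - δ ≤ h) :
    v + (Pi.single i δ - Pi.single j δ) ∈ boundedSimplex ι ℓ h := by
  refine ⟨fun t => ?_, ?_⟩
  · simp only [Pi.add_apply, Pi.sub_apply]
    rcases eq_or_ne t i with rfl | hti
    · rw [Pi.single_eq_same, Pi.single_eq_of_ne hij, sub_zero]
      exact hi
    rcases eq_or_ne t j with rfl | htj
    · rw [Pi.single_eq_same, Pi.single_eq_of_ne hti, zero_sub, ← sub_eq_add_neg]
      exact hj
    · rw [Pi.single_eq_of_ne hti, Pi.single_eq_of_ne htj, sub_zero, add_zero]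
      exact hv.1 t
  · simp [sum_add_distrib, hv.2]

theorem eq_of_mem_extremePoints_boundedSimplex {v : ι → ℝ}
    (hv : v ∈ (boundedSimplex ι ℓ h).extremePoints ℝ) {i j : ι}
    (hi : ℓ < v i ∧ v i < h) (hj : ℓ < v j ∧ v j < h) : i = j := by
  by_contra hij
  set ε := min (min (v i - ℓ) (h - v i)) (min (v j - ℓ) (h - v j))
  have hε : 0 < ε := by simp only [ε, lt_min_iff, sub_pos]; exact ⟨⟨hi.1, hi.2⟩, hj.1, hj.2⟩
  have hε' : ε ≤ v i - ℓ ∧ ε ≤ h - v i ∧ ε ≤ v j - ℓ ∧ ε ≤ h - v j := by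
    simp only [ε, min_le_iff, le_refl, true_or, or_true, and_self]
  have hadd := add_single_sub_single_mem_boundedSimplex hv.1 hij (δ := ε)
    ⟨by linarith, by linarith⟩ ⟨by linarith, by linarith⟩
  have hsub := add_single_sub_single_mem_boundedSimplex hv.1 hij (δ := -ε)
    ⟨by linarith, by linarith⟩ ⟨by linarith, by linarith⟩
  rw [Pi.single_neg, Pi.single_neg, neg_sub_neg, ← neg_sub, ← sub_eq_add_neg] at hsub
  have := congrFun (eq_zero_of_add_mem_of_sub_mem_of_mem_extremePoints hv hadd hsub) i
  simp [Pi.single_eq_of_ne hij] at this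
  exact hε.ne' this

theorem exists_forall_ne_eq_or_eq_of_mem_extremePoints_boundedSimplex {v : ι → ℝ}
    (hv : v ∈ (boundedSimplex ι ℓ h).extremePoints ℝ) (hne : ∃ i, v i ≠ h) :
    ∃ j, v j ≠ h ∧ ∀ i ≠ j, v i = ℓ ∨ v i = h := by
  obtain ⟨i₀, hi₀⟩ := hne
  -- A largest coordinate below `h` is free as soon as any other coordinate is.
  obtain ⟨j, hj, hjmax⟩ := exists_max_image {i | v i ≠ h} v ⟨i₀, by simpa using hi₀⟩
  have hjh : v j ≠ h := by simpa using hj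
  refine ⟨j, hjh, fun i hij => ?_⟩
  by_contra! hi
  have hfree (t : ι) (ht : v t ≠ ℓ ∧ v t ≠ h) : ℓ < v t ∧ v t < h :=
    ⟨(hv.1.1 t).1.lt_of_ne' ht.1, (hv.1.1 t).2.lt_of_ne ht.2⟩
  have hvij : v i ≤ v j := hjmax i (by simpa using hi.2)
  exact hij (eq_of_mem_extremePoints_boundedSimplex hv (hfree i hi)
    (hfree j ⟨((hfree i hi).1.trans_le hvij).ne', hjh⟩))

theorem map_univ_eq_of_mem_extremePoints_boundedSimplex {v : ι → ℝ}
    (hv : v ∈ (boundedSimplex ι ℓ h).extremePoints ℝ) (hh : 1 < Fintype.card ι * h) {k : ℕ}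
    (hk : k = ⌊(1 - Fintype.card ι * ℓ) / (h - ℓ)⌋₊) :
    univ.val.map v = Multiset.replicate k h +
      (1 - k * h - (Fintype.card ι - k - 1) * ℓ) ::ₘ
        Multiset.replicate (Fintype.card ι - k - 1) ℓ := by
  have hne : ∃ i, v i ≠ h := by
    by_contra! hall
    have := hv.1.2
    simp [hall] at this
    linarith
  obtain ⟨j, hjh, hbounds⟩ :=
    exists_forall_ne_eq_or_eq_of_mem_extremePoints_boundedSimplex hv hne
  set A := univ.filter (v · = h)
  have hjA : j ∉ A := by simpa [A] using hjh
  have hvA : v = fun i => if i ∈ A then h else if i = j then v j else ℓ := by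
    funext i
    split_ifs with hiA hij
    · simpa [A] using hiA
    · rw [hij]
    · exact (hbounds i hij).resolve_right (by simpa [A] using hiA)
  have hmap := map_univ_ite_mem_ite_eq hjA h ℓ (v j)
  rw [← hvA] at hmap
  have hAn : #A < Fintype.card ι := card_lt_univ_of_notMem hjA
  have hcast : ((Fintype.card ι - #A - 1 : ℕ) : ℝ) = Fintype.card ι - #A - 1 := by
    rw [Nat.cast_sub (by omega), Nat.cast_sub hAn.le, Nat.cast_one]
  have hsum : #A * h + (Fintype.card ι - #A - 1) * ℓ + v j = 1 := by
    have := congrArg Multiset.sum hmap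
    rw [← Finset.sum_eq_multiset_sum, hv.1.2] at this
    simp only [Multiset.sum_add, Multiset.sum_cons, Multiset.sum_replicate, nsmul_eq_mul,
      hcast] at this
    linarith
  have hvj : ℓ ≤ v j ∧ v j < h := ⟨(hv.1.1 j).1, (hv.1.1 j).2.lt_of_ne hjh⟩
  have hAk : #A = k := by
    have hbound : #A * (h - ℓ) ≤ 1 - Fintype.card ι * ℓ ∧
        1 - Fintype.card ι * ℓ < (#A + 1) * (h - ℓ) := by
      constructor <;> linarith
    rw [hk, eq_comm, Nat.floor_div_eq_iff _ (by linarith)]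
    · exact hbound
    · exact (mul_nonneg (Nat.cast_nonneg _) (by linarith)).trans hbound.1
  rw [hmap, ← hAk]
  congr 2
  linarith

theorem map_univ_fin_ite_lt {β : Type*} {n k : ℕ} (hkn : k < n) (a b c : β) :
    univ.val.map (fun i : Fin n => if (i : ℕ) < k then a else if (i : ℕ) < n - 1 then b else c) =
      Multiset.replicate k a + c ::ₘ Multiset.replicate (n - k - 1) b := by
  set A : Finset (Fin n) := {i | (i : ℕ) < k}
  have hA : #A = k := by rw [Fin.card_filter_val_lt, min_eq_right hkn.le]
  set last : Fin n := ⟨n - 1, by omega⟩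
  have hlast : last ∉ A := by simp [A, last]; omega
  have hfun : (fun i : Fin n => if (i : ℕ) < k then a else if (i : ℕ) < n - 1 then b else c) =
      fun i => if i ∈ A then a else if i = last then c else b := by
    funext i
    simp only [A, last, mem_filter, mem_univ, true_and, Fin.ext_iff]
    split_ifs <;> first | rfl | omega
  rw [hfun, map_univ_ite_mem_ite_eq hlast, hA, Fintype.card_fin]

theorem stmt_3_general (n : ℕ) (hn : 1 ≤ n) (ℓ h : ℝ)
    (hℓn : ℓ < 1 / n) (hhn : 1 / (n : ℝ) < h)
    (k : ℕ) (hk : k = ⌊(1 - n * ℓ) / (h - ℓ)⌋₊)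
    (f : ℝ) (hf : f = 1 - k * h - ((n : ℝ) - k - 1) * ℓ) :
    (ℓ ≤ f ∧ f ≤ h) ∧
    ∀ v ∈ Set.extremePoints ℝ
        {p : Fin n → ℝ | (∀ i, ℓ ≤ p i ∧ p i ≤ h) ∧ ∑ i, p i = 1},
      ∃ σ : Equiv.Perm (Fin n),
        v ∘ σ = fun i : Fin n =>
          if (i : ℕ) < k then h else if (i : ℕ) < n - 1 then ℓ else f := by
  have hn₀ : (0 : ℝ) < n := by exact_mod_cast hn
  have hnℓ : n * ℓ < 1 := by rwa [lt_div_iff₀ hn₀, mul_comm] at hℓn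
  have hnh : 1 < n * h := by rwa [div_lt_iff₀ hn₀, mul_comm] at hhn
  obtain ⟨hk₁, hk₂⟩ := (Nat.floor_div_eq_iff (by linarith) (by linarith)).1 hk.symm
  refine ⟨⟨by rw [hf]; linarith, by rw [hf]; linarith⟩, fun v hv => ?_⟩
  have hkn : k < n := by
    have : (k : ℝ) < n := by nlinarith
    exact_mod_cast this
  have hmap := map_univ_eq_of_mem_extremePoints_boundedSimplex hv (by simpa using hnh)
    (by simpa using hk)
  rw [Fintype.card_fin, ← hf] at hmap
  exact exists_perm_comp_eq_of_map_univ_eq (hmap.trans (map_univ_fin_ite_lt hkn h ℓ f).symm)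

theorem stmt_3 (n : ℕ) (hn : 1 ≤ n) (ℓ h : ℝ)
    (hℓ0 : 0 ≤ ℓ) (hℓ1 : ℓ ≤ 1) (hh0 : 0 ≤ h) (hh1 : h ≤ 1)
    (hℓn : ℓ < 1 / n) (hhn : 1 / (n : ℝ) < h)
    (k : ℕ) (hk : k = ⌊(1 - n * ℓ) / (h - ℓ)⌋₊)
    (f : ℝ) (hf : f = 1 - k * h - ((n : ℝ) - k - 1) * ℓ) :
    (ℓ ≤ f ∧ f ≤ h) ∧
    ∀ v ∈ Set.extremePoints ℝ
        {p : Fin n → ℝ | (∀ i, ℓ ≤ p i ∧ p i ≤ h) ∧ ∑ i, p i = 1},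
      ∃ σ : Equiv.Perm (Fin n),
        v ∘ σ = fun i : Fin n =>
          if (i : ℕ) < k then h else if (i : ℕ) < n - 1 then ℓ else f :=
  stmt_3_general n hn ℓ h hℓn hhn k hk f hf
end

section
/- Let I ⊆ ℝ^X (for finite index set X) and O ⊆ ℝ^(A × X) be convex polytopes (convex hulls of finite vertex sets V_I and V_O respectively). Define R = {r : A × X → ℝ | r is a finite convex combination of elements of the form (a, x) ↦ p(x)·q(a, x) with p ∈ I, q ∈ O}. Then R equals the convex hull of the finite set {(a, x) ↦ v(x)·w(a, x) | v ∈ V_I, w ∈ V_O}; in particular R is a convex polytope. -/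
/-! A bilinear map is affine in each argument separately, so it maps a point of
`convexHull s × convexHull t` into the convex hull of the images of pairs of points of `s × t`:
first move the second argument to the points of `t`, then the first to the points of `s`.
The pointwise product `(p, q) ↦ (a, x) ↦ p x * q (a, x)` is such a bilinear map. -/

open Set

section Bilinear

variable {𝕜 E F G : Type*} [CommSemiring 𝕜] [PartialOrder 𝕜]
  [AddCommMonoid E] [AddCommMonoid F] [AddCommMonoid G] [Module 𝕜 E] [Module 𝕜 F] [Module 𝕜 G]

theorem LinearMap.image2_convexHull_subset (f : E →ₗ[𝕜] F →ₗ[𝕜] G) (s : Set E) (t : Set F) :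
    image2 (fun x y => f x y) (convexHull 𝕜 s) (convexHull 𝕜 t) ⊆
      convexHull 𝕜 (image2 (fun x y => f x y) s t) := by
  rintro _ ⟨x, hx, y, hy, rfl⟩
  have hxt : f x '' t ⊆ convexHull 𝕜 (image2 (fun x y => f x y) s t) := by
    rintro _ ⟨y, hy, rfl⟩
    have hxy : f x y ∈ convexHull 𝕜 (f.flip y '' s) := by
      rw [← LinearMap.image_convexHull]
      exact mem_image_of_mem (f.flip y) hx
    refine convexHull_min ?_ (convex_convexHull 𝕜 _) hxy
    rintro _ ⟨x, hx, rfl⟩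
    exact subset_convexHull 𝕜 _ (mem_image2_of_mem hx hy)
  have hxy : f x y ∈ convexHull 𝕜 (f x '' t) := by
    rw [← LinearMap.image_convexHull]
    exact mem_image_of_mem (f x) hy
  exact convexHull_min hxt (convex_convexHull 𝕜 _) hxy

theorem LinearMap.convexHull_image2_convexHull (f : E →ₗ[𝕜] F →ₗ[𝕜] G) (s : Set E) (t : Set F) :
    convexHull 𝕜 (image2 (fun x y => f x y) (convexHull 𝕜 s) (convexHull 𝕜 t)) =
      convexHull 𝕜 (image2 (fun x y => f x y) s t) :=
  (convexHull_min (f.image2_convexHull_subset s t) (convex_convexHull 𝕜 _)).antisymm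
    (convexHull_mono (image2_subset (subset_convexHull 𝕜 s) (subset_convexHull 𝕜 t)))

end Bilinear

def inputOutputMul (X A : Type*) : (X → ℝ) →ₗ[ℝ] (A × X → ℝ) →ₗ[ℝ] (A × X → ℝ) :=
  LinearMap.mk₂ ℝ (fun p q ax => p ax.2 * q ax)
    (fun _ _ _ => funext fun _ => add_mul _ _ _)
    (fun _ _ _ => funext fun _ => mul_assoc _ _ _)
    (fun _ _ _ => funext fun _ => mul_add _ _ _)
    (fun _ _ _ => funext fun _ => mul_left_comm _ _ _)

theorem setOf_eq_image2_inputOutputMul {X A : Type*} (P : Set (X → ℝ)) (Q : Set (A × X → ℝ)) :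
    {r : A × X → ℝ | ∃ p ∈ P, ∃ q ∈ Q, r = fun ax => p ax.2 * q ax} =
      image2 (fun p q => inputOutputMul X A p q) P Q := by
  ext r
  simp only [mem_ofPred_eq, mem_image2, eq_comm (a := r)]
  rfl

theorem stmt_5_general {X A : Type}
    (VI : Finset (X → ℝ)) (VO : Finset (A × X → ℝ)) :
    convexHull ℝ {r : A × X → ℝ |
        ∃ p ∈ convexHull ℝ (VI : Set (X → ℝ)),
        ∃ q ∈ convexHull ℝ (VO : Set (A × X → ℝ)),
          r = fun ax => p ax.2 * q ax} =
      convexHull ℝ {r : A × X → ℝ |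
        ∃ v ∈ VI, ∃ w ∈ VO, r = fun ax => v ax.2 * w ax} := by
  have hV := setOf_eq_image2_inputOutputMul (VI : Set (X → ℝ)) (VO : Set (A × X → ℝ))
  simp only [Finset.mem_coe] at hV
  rw [setOf_eq_image2_inputOutputMul, hV]
  exact (inputOutputMul X A).convexHull_image2_convexHull _ _

theorem stmt_5 {X A : Type} [Fintype X] [Fintype A] [DecidableEq X] [DecidableEq A]
    (VI : Finset (X → ℝ)) (VO : Finset (A × X → ℝ)) :
    convexHull ℝ {r : A × X → ℝ |
        ∃ p ∈ convexHull ℝ (VI : Set (X → ℝ)),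
        ∃ q ∈ convexHull ℝ (VO : Set (A × X → ℝ)),
          r = fun ax => p ax.2 * q ax} =
      convexHull ℝ {r : A × X → ℝ |
        ∃ v ∈ VI, ∃ w ∈ VO, r = fun ax => v ax.2 * w ax} :=
  stmt_5_general VI VO
end

section
/- Fix ℓ, h with 0 ≤ ℓ ≤ 1/4 ≤ h ≤ 1. For every measurement dependent local distribution P on (a,b,x,y) ∈ {0,1}^4 — i.e., P(a,b,x,y) = ∑_λ ρ(λ) · q_λ(x,y) · α_λ(a,x) · β_λ(b,y) where ρ is a finitely-supported probability weight, q_λ is a probability distribution on {0,1}^2 with ℓ ≤ q_λ(x,y) ≤ h for all x,y, and α_λ(·,x), β_λ(·,y) are conditional probability distributions on {0,1} — the inequality ℓ·P(0,0,0,0) − h·(P(0,1,0,1) + P(1,0,1,0) + P(0,0,1,1)) ≤ 0 holds. -/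
/-!
The inequality holds term by term in `λ`. Since `ℓ q_λ(0,0) ≤ ℓ h ≤ h q_λ(x,y)`, each term reduces to
the Bell-type inequality `α(0|0) β(0|0) ≤ α(0|0) β(1|1) + α(1|1) β(0|0) + α(0|1) β(0|1)` for the
response functions of the hidden state, where `α(a|x) = α λ a x`; after substituting
`α(1|1) = 1 - α(0|1)` and `β(1|1) = 1 - β(0|1)` it holds for arbitrary numbers in `[0, 1]`.
-/

open Finset

theorem mul_le_bell_sum {a₀ a₁ b₀ b₁ : ℝ} (ha₀ : 0 ≤ a₀) (ha₀' : a₀ ≤ 1) (ha₁ : 0 ≤ a₁)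
    (ha₁' : a₁ ≤ 1) (hb₀ : 0 ≤ b₀) (hb₀' : b₀ ≤ 1) (hb₁ : 0 ≤ b₁) (hb₁' : b₁ ≤ 1) :
    a₀ * b₀ ≤ a₀ * (1 - b₁) + (1 - a₁) * b₀ + a₁ * b₁ := by
  have hb₀b₁ : b₀ * b₁ ≤ (1 - a₁) * b₀ + a₁ * b₁ :=
    calc b₀ * b₁ = (1 - a₁) * (b₀ * b₁) + a₁ * (b₀ * b₁) := by ring
      _ ≤ (1 - a₁) * b₀ + a₁ * b₁ :=
        add_le_add (mul_le_mul_of_nonneg_left (mul_le_of_le_one_right hb₀ hb₁') (by linarith))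
          (mul_le_mul_of_nonneg_left (mul_le_of_le_one_left hb₁ hb₀') ha₁)
  calc a₀ * b₀ = a₀ * b₀ * (1 - b₁) + a₀ * (b₀ * b₁) := by ring
    _ ≤ a₀ * (1 - b₁) + b₀ * b₁ :=
        add_le_add (mul_le_mul_of_nonneg_right (mul_le_of_le_one_right ha₀ hb₀') (by linarith))
          (mul_le_of_le_one_left (mul_nonneg hb₀ hb₁) ha₀')
    _ ≤ a₀ * (1 - b₁) + (1 - a₁) * b₀ + a₁ * b₁ := by linarith

theorem hiddenState_term_nonpos {ℓ h r : ℝ} {q α β : Fin 2 → Fin 2 → ℝ} (hℓ : 0 ≤ ℓ)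
    (hr : 0 ≤ r) (hq : ∀ x y, ℓ ≤ q x y ∧ q x y ≤ h)
    (hα0 : ∀ a x, 0 ≤ α a x) (hα1 : ∀ x, ∑ a : Fin 2, α a x = 1)
    (hβ0 : ∀ b y, 0 ≤ β b y) (hβ1 : ∀ y, ∑ b : Fin 2, β b y = 1) :
    ℓ * (r * q 0 0 * α 0 0 * β 0 0) - h * (r * q 0 1 * α 0 0 * β 1 1
      + r * q 1 0 * α 1 1 * β 0 0 + r * q 1 1 * α 0 1 * β 0 1) ≤ 0 := by
  simp only [Fin.sum_univ_two] at hα1 hβ1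
  have hbell : α 0 0 * β 0 0 ≤ α 0 0 * β 1 1 + α 1 1 * β 0 0 + α 0 1 * β 0 1 := by
    rw [show α 1 1 = 1 - α 0 1 by linarith [hα1 1], show β 1 1 = 1 - β 0 1 by linarith [hβ1 1]]
    exact mul_le_bell_sum (hα0 0 0) (by linarith [hα0 1 0, hα1 0]) (hα0 0 1)
      (by linarith [hα0 1 1, hα1 1]) (hβ0 0 0) (by linarith [hβ0 1 0, hβ1 0]) (hβ0 0 1)
      (by linarith [hβ0 1 1, hβ1 1])
  have hh : 0 ≤ h := hℓ.trans ((hq 0 0).1.trans (hq 0 0).2)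
  rw [sub_nonpos]
  calc ℓ * (r * q 0 0 * α 0 0 * β 0 0) = r * ℓ * (q 0 0 * (α 0 0 * β 0 0)) := by ring
    _ ≤ r * ℓ * (h * (α 0 0 * β 0 0)) := by
      have := mul_nonneg (hα0 0 0) (hβ0 0 0)
      gcongr
      exact (hq 0 0).2
    _ ≤ r * ℓ * (h * (α 0 0 * β 1 1 + α 1 1 * β 0 0 + α 0 1 * β 0 1)) := by gcongr
    _ = r * h * (ℓ * α 0 0 * β 1 1 + ℓ * α 1 1 * β 0 0 + ℓ * α 0 1 * β 0 1) := by ring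
    _ ≤ r * h * (q 0 1 * α 0 0 * β 1 1 + q 1 0 * α 1 1 * β 0 0 + q 1 1 * α 0 1 * β 0 1) := by
      gcongr <;> first | exact hα0 _ _ | exact hβ0 _ _ | exact (hq _ _).1
    _ = h * (r * q 0 1 * α 0 0 * β 1 1
      + r * q 1 0 * α 1 1 * β 0 0 + r * q 1 1 * α 0 1 * β 0 1) := by ring

theorem stmt_7_general (ℓ h : ℝ) (hℓ0 : 0 ≤ ℓ)
    (Λ : Finset ℕ) (ρ : ℕ → ℝ)
    (q : ℕ → Fin 2 → Fin 2 → ℝ)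
    (α β : ℕ → Fin 2 → Fin 2 → ℝ)
    (hρ0 : ∀ l ∈ Λ, 0 ≤ ρ l)
    (hqbd : ∀ l ∈ Λ, ∀ x y, ℓ ≤ q l x y ∧ q l x y ≤ h)
    (hα0 : ∀ l ∈ Λ, ∀ a x, 0 ≤ α l a x)
    (hα1 : ∀ l ∈ Λ, ∀ x, ∑ a : Fin 2, α l a x = 1)
    (hβ0 : ∀ l ∈ Λ, ∀ b y, 0 ≤ β l b y)
    (hβ1 : ∀ l ∈ Λ, ∀ y, ∑ b : Fin 2, β l b y = 1)
    (P : Fin 2 → Fin 2 → Fin 2 → Fin 2 → ℝ)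
    (hP : ∀ a b x y, P a b x y = ∑ l ∈ Λ, ρ l * q l x y * α l a x * β l b y) :
    ℓ * P 0 0 0 0 - h * (P 0 1 0 1 + P 1 0 1 0 + P 0 0 1 1) ≤ 0 := by
  simp only [hP, mul_sum, ← sum_add_distrib, ← sum_sub_distrib]
  exact sum_nonpos fun l hl => hiddenState_term_nonpos hℓ0 (hρ0 l hl) (hqbd l hl) (hα0 l hl)
    (hα1 l hl) (hβ0 l hl) (hβ1 l hl)

theorem stmt_7 (ℓ h : ℝ) (hℓ0 : 0 ≤ ℓ) (hℓ : ℓ ≤ 1 / 4) (hh : 1 / 4 ≤ h) (hh1 : h ≤ 1)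
    (Λ : Finset ℕ) (ρ : ℕ → ℝ)
    (q : ℕ → Fin 2 → Fin 2 → ℝ)
    (α β : ℕ → Fin 2 → Fin 2 → ℝ)
    (hρ0 : ∀ l ∈ Λ, 0 ≤ ρ l) (hρ1 : ∑ l ∈ Λ, ρ l = 1)
    (hqbd : ∀ l ∈ Λ, ∀ x y, ℓ ≤ q l x y ∧ q l x y ≤ h)
    (hqsum : ∀ l ∈ Λ, ∑ x : Fin 2, ∑ y : Fin 2, q l x y = 1)
    (hα0 : ∀ l ∈ Λ, ∀ a x, 0 ≤ α l a x)
    (hα1 : ∀ l ∈ Λ, ∀ x, ∑ a : Fin 2, α l a x = 1)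
    (hβ0 : ∀ l ∈ Λ, ∀ b y, 0 ≤ β l b y)
    (hβ1 : ∀ l ∈ Λ, ∀ y, ∑ b : Fin 2, β l b y = 1)
    (P : Fin 2 → Fin 2 → Fin 2 → Fin 2 → ℝ)
    (hP : ∀ a b x y, P a b x y = ∑ l ∈ Λ, ρ l * q l x y * α l a x * β l b y) :
    ℓ * P 0 0 0 0 - h * (P 0 1 0 1 + P 1 0 1 0 + P 0 0 1 1) ≤ 0 :=
  stmt_7_general ℓ h hℓ0 Λ ρ q α β hρ0 hqbd hα0 hα1 hβ0 hβ1 P hP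
end

section
/- There exists a Hardy-type quantum behavior P(ab|xy) on binary inputs/outputs, realizable by projective measurements on a two-qubit pure state, satisfying P(00|00) = 1/12, P(01|01) = P(10|10) = P(00|11) = 0, such that for any ℓ > 0, any h, and uniform observed inputs P(xy) = 1/4, the full distribution P(abxy) = P(xy)P(ab|xy) violates the MDL inequality ℓP(0000) − h(P(0101)+P(1010)+P(0011)) ≤ 0, yielding the value ℓ/48 > 0. -/
/-!
For `ψ = α|00⟩ + β|11⟩` and real measurement vectors at angles `φ` (Alice) and `φ'` (Bob), the
Born amplitude is `((α + β) cos (φ - φ') + (α - β) cos (φ + φ')) / 2`, which for the state of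
the paper is `(√5 cos (φ - φ') - cos (φ + φ')) / (2√3)`. Bob measures the mirror images of
Alice's bases, so in the four relevant events `φ - φ'` is `2θ` shifted by a multiple of `π/4`
and `φ + φ'` is a multiple of `π/4`. Since `cos 2θ = 2/√5` and `sin 2θ = 1/√5`, the three Hardy
amplitudes vanish and the first one is `1/(2√3)`, so the MDL expression equals `ℓ/4 · 1/12`.
-/

open Real

noncomputable section

namespace HardyMDL

lemma sum_star_ofReal_mul_ofReal {ι : Type*} [Fintype ι] (u v : ι → ℝ) :
    ∑ i, star (u i : ℂ) * (v i : ℂ) = ((∑ i, u i * v i : ℝ) : ℂ) := by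
  simp [Complex.conj_ofReal]

def unitVec (φ : ℝ) : Fin 2 → ℝ := ![cos φ, sin φ]

lemma sum_unitVec_mul_unitVec (φ ψ : ℝ) : ∑ i, unitVec φ i * unitVec ψ i = cos (φ - ψ) := by
  simp [unitVec, Fin.sum_univ_two, cos_sub]

def rotBasis (φ : ℝ) : Fin 2 → Fin 2 → ℝ := ![unitVec φ, unitVec (φ + π / 2)]

lemma rotBasis_orthonormal (φ : ℝ) (a a' : Fin 2) :
    ∑ i, star (rotBasis φ a i : ℂ) * (rotBasis φ a' i : ℂ) = if a = a' then 1 else 0 := by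
  rw [sum_star_ofReal_mul_ofReal]
  fin_cases a <;> fin_cases a' <;>
    simp only [rotBasis, Fin.zero_eta, Fin.mk_one, Matrix.cons_val_zero, Matrix.cons_val_one,
      sum_unitVec_mul_unitVec] <;>
    simp

def schmidtState (α β : ℝ) : Fin 2 × Fin 2 → ℂ := fun p => ((![![α, 0], ![0, β]] p.1 p.2 : ℝ) : ℂ)

lemma sum_normSq_schmidtState (α β : ℝ) :
    ∑ p, Complex.normSq (schmidtState α β p) = α ^ 2 + β ^ 2 := by
  simp [schmidtState, Fintype.sum_prod_type, Fin.sum_univ_two, sq]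

lemma inner_tmul_schmidtState (α β : ℝ) (u v : Fin 2 → ℝ) :
    ∑ p, star ((u p.1 : ℂ) * (v p.2 : ℂ)) * schmidtState α β p =
      ((α * u 0 * v 0 + β * u 1 * v 1 : ℝ) : ℂ) := by
  simp only [schmidtState, Fintype.sum_prod_type, Fin.sum_univ_two, star_mul', Complex.star_def,
    Complex.conj_ofReal, Matrix.cons_val_zero, Matrix.cons_val_one, Matrix.cons_val_fin_one]
  push_cast
  ring

lemma inner_unitVec_tmul_schmidtState (α β φ ψ : ℝ) :
    ∑ p, star ((unitVec φ p.1 : ℂ) * (unitVec ψ p.2 : ℂ)) * schmidtState α β p =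
      (((α + β) * cos (φ - ψ) + (α - β) * cos (φ + ψ)) / 2 : ℝ) := by
  rw [inner_tmul_schmidtState]
  simp only [unitVec, Matrix.cons_val_zero, Matrix.cons_val_one, cos_sub, cos_add]
  push_cast
  ring

lemma two_le_sqrt_five : 2 ≤ √5 := by
  rw [Real.le_sqrt] <;> norm_num

def hardyAngle : ℝ := arccos √(1 / 2 + 1 / √5)

lemma cos_hardyAngle : cos hardyAngle = √(1 / 2 + 1 / √5) := by
  have h5 := two_le_sqrt_five
  refine cos_arccos (by linarith [Real.sqrt_nonneg (1 / 2 + 1 / √5)]) ?_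
  rw [Real.sqrt_le_one]
  have : 1 / √5 ≤ 1 / 2 := one_div_le_one_div_of_le (by norm_num) h5
  linarith

lemma cos_two_mul_hardyAngle : cos (2 * hardyAngle) = 2 / √5 := by
  rw [cos_two_mul, cos_hardyAngle, Real.sq_sqrt (by positivity)]
  ring

lemma sin_two_mul_hardyAngle : sin (2 * hardyAngle) = 1 / √5 := by
  have h0 : 0 ≤ hardyAngle := arccos_nonneg _
  have h1 : hardyAngle ≤ π / 2 := arccos_le_pi_div_two.mpr (Real.sqrt_nonneg _)
  rw [sin_eq_sqrt_one_sub_cos_sq (by linarith) (by linarith), cos_two_mul_hardyAngle, div_pow,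
    Real.sq_sqrt (by norm_num), one_div, ← Real.sqrt_inv]
  norm_num

local notation "θ" => hardyAngle

def hardyState : Fin 2 × Fin 2 → ℂ := schmidtState ((√5 - 1) / (2 * √3)) ((√5 + 1) / (2 * √3))

lemma sum_normSq_hardyState : ∑ p, Complex.normSq (hardyState p) = 1 := by
  rw [hardyState, sum_normSq_schmidtState, div_pow, div_pow, mul_pow]
  have h3 : (0 : ℝ) < √3 := by positivity
  field_simp
  linear_combination (2 : ℝ) * Real.sq_sqrt (show (0 : ℝ) ≤ 5 by norm_num) -
    4 * Real.sq_sqrt (show (0 : ℝ) ≤ 3 by norm_num)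

lemma normSq_inner_unitVec_tmul_hardyState (φ ψ : ℝ) :
    Complex.normSq (∑ p, star ((unitVec φ p.1 : ℂ) * (unitVec ψ p.2 : ℂ)) * hardyState p) =
      ((√5 * cos (φ - ψ) - cos (φ + ψ)) / (2 * √3)) ^ 2 := by
  rw [hardyState, inner_unitVec_tmul_schmidtState, Complex.normSq_ofReal, ← sq]
  congr 1
  have h3 : (0 : ℝ) < √3 := by positivity
  field_simp
  ring

def aliceAngle : Fin 2 → ℝ := ![θ, θ - π / 4]

def alice (x : Fin 2) : Fin 2 → Fin 2 → ℝ := rotBasis (aliceAngle x)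

def bob (y : Fin 2) : Fin 2 → Fin 2 → ℝ := rotBasis (-aliceAngle y)

def bornProb (a b x y : Fin 2) : ℝ :=
  Complex.normSq (∑ p, star ((alice x a p.1 : ℂ) * (bob y b p.2 : ℂ)) * hardyState p)

lemma bornProb_0000 : bornProb 0 0 0 0 = 1 / 12 := by
  simp only [bornProb, alice, bob, aliceAngle, rotBasis, Matrix.cons_val_zero,
    normSq_inner_unitVec_tmul_hardyState]
  rw [sub_neg_eq_add, ← two_mul, add_neg_cancel, cos_two_mul_hardyAngle, cos_zero]
  have h5 : (0 : ℝ) < √5 := by positivity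
  field_simp
  rw [Real.sq_sqrt (by norm_num)]
  norm_num

lemma bornProb_0101 : bornProb 0 1 0 1 = 0 := by
  simp only [bornProb, alice, bob, aliceAngle, rotBasis, Matrix.cons_val_zero,
    Matrix.cons_val_one, normSq_inner_unitVec_tmul_hardyState]
  rw [show θ - (-(θ - π / 4) + π / 2) = 2 * θ - (π / 4 + π / 2) by ring,
    show θ + (-(θ - π / 4) + π / 2) = π / 4 + π / 2 by ring]
  simp only [cos_sub, cos_add_pi_div_two, sin_add_pi_div_two, cos_two_mul_hardyAngle,
    sin_two_mul_hardyAngle, cos_pi_div_four, sin_pi_div_four]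
  field_simp
  ring

lemma bornProb_1010 : bornProb 1 0 1 0 = 0 := by
  simp only [bornProb, alice, bob, aliceAngle, rotBasis, Matrix.cons_val_zero,
    Matrix.cons_val_one, normSq_inner_unitVec_tmul_hardyState]
  rw [show θ - π / 4 + π / 2 - -θ = 2 * θ + π / 4 by ring,
    show θ - π / 4 + π / 2 + -θ = π / 4 by ring]
  simp only [cos_add, cos_two_mul_hardyAngle, sin_two_mul_hardyAngle, cos_pi_div_four,
    sin_pi_div_four]
  field_simp
  ring

lemma bornProb_0011 : bornProb 0 0 1 1 = 0 := by
  simp only [bornProb, alice, bob, aliceAngle, rotBasis, Matrix.cons_val_zero,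
    Matrix.cons_val_one, normSq_inner_unitVec_tmul_hardyState]
  rw [show θ - π / 4 - -(θ - π / 4) = 2 * θ - π / 2 by ring, add_neg_cancel, cos_sub_pi_div_two,
    sin_two_mul_hardyAngle, cos_zero]
  field_simp
  ring

end HardyMDL

open HardyMDL in
/-- existence of a Hardy-type quantum behavior, realized by projective
measurements (orthonormal bases) on a two-qubit pure state, violating the MDL
inequality for every `ℓ > 0` with value `ℓ/48`. -/
theorem stmt_9 :
    ∃ (ψ : Fin 2 × Fin 2 → ℂ)
      (e f : Fin 2 → Fin 2 → Fin 2 → ℂ)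
      (P : Fin 2 → Fin 2 → Fin 2 → Fin 2 → ℝ),
      -- ψ is a unit vector in ℂ² ⊗ ℂ²
      (∑ p : Fin 2 × Fin 2, Complex.normSq (ψ p) = 1) ∧
      -- for each input x, (e x a)_a is an orthonormal basis of ℂ² (projective measurement)
      (∀ x a a', (∑ i : Fin 2, star (e x a i) * e x a' i) =
        if a = a' then 1 else 0) ∧
      (∀ y b b', (∑ i : Fin 2, star (f y b i) * f y b' i) =
        if b = b' then 1 else 0) ∧
      -- Born rule: P(ab|xy) = |⟨(e x a) ⊗ (f y b), ψ⟩|²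
      (∀ a b x y, P a b x y =
        Complex.normSq (∑ p : Fin 2 × Fin 2, star (e x a p.1 * f y b p.2) * ψ p)) ∧
      -- Hardy-type constraints
      P 0 0 0 0 = 1 / 12 ∧ P 0 1 0 1 = 0 ∧ P 1 0 1 0 = 0 ∧ P 0 0 1 1 = 0 ∧
      -- with uniform inputs P(xy) = 1/4, the MDL inequality is violated for every ℓ > 0
      (∀ ℓ h : ℝ, 0 < ℓ →
        ℓ * (1 / 4 * P 0 0 0 0) -
          h * (1 / 4 * P 0 1 0 1 + 1 / 4 * P 1 0 1 0 + 1 / 4 * P 0 0 1 1) = ℓ / 48 ∧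
        0 < ℓ / 48) := by
  refine ⟨hardyState, fun x a i => alice x a i, fun y b i => bob y b i, bornProb,
    sum_normSq_hardyState, fun x => rotBasis_orthonormal _, fun y => rotBasis_orthonormal _,
    fun _ _ _ _ => rfl, bornProb_0000, bornProb_0101, bornProb_1010, bornProb_0011,
    fun ℓ h hℓ => ⟨?_, by positivity⟩⟩
  rw [bornProb_0000, bornProb_0101, bornProb_1010, bornProb_0011]
  ring
end
end

section
/- Let θ = arccos√(1/2 + 1/√5), and define unit vectors |A₀⟩ = (cosθ, sinθ), |B₀⟩ = (cosθ, −sinθ) in ℝ², and |Au⟩ = (1/√3)(((√5−1)/2)|00⟩ + ((√5+1)/2)|11⟩). Then |⟨A₀ ⊗ B₀ | Au⟩|² = 1/12. -/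
/-!
With `cos² θ = 1/2 + 1/√5` and `sin² θ = 1/2 - 1/√5`, only the `|00⟩` and `|11⟩` components of
`|A₀⟩ ⊗ |B₀⟩` meet `|Au⟩`, giving the amplitude
`(1/√3) (cos² θ (√5 - 1)/2 - sin² θ (√5 + 1)/2) = (1/√3) · 1/2`, whose square is `1/12`.
-/

open Real

lemma cos_sq_arccos_sqrt {x : ℝ} (h₀ : 0 ≤ x) (h₁ : x ≤ 1) : cos (arccos √x) ^ 2 = x := by
  rw [cos_arccos (by linarith [sqrt_nonneg x]) (sqrt_le_one.mpr h₁), sq_sqrt h₀]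

lemma sin_sq_arccos_sqrt {x : ℝ} (h₀ : 0 ≤ x) (h₁ : x ≤ 1) : sin (arccos √x) ^ 2 = 1 - x := by
  linarith [sin_sq_add_cos_sq (arccos √x), cos_sq_arccos_sqrt h₀ h₁]

lemma sum_prod_fin_two_mul_diag {R : Type*} [CommSemiring R] (u v : Fin 2 → R) (a b : R) :
    ∑ p : Fin 2 × Fin 2, u p.1 * v p.2 * (if p = (0, 0) then a else if p = (1, 1) then b else 0)
      = u 0 * v 0 * a + u 1 * v 1 * b := by
  simp [Fintype.sum_prod_type, Fin.sum_univ_two]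

lemma half_add_inv_sqrt_five_le_one : 1 / 2 + 1 / √5 ≤ 1 := by
  have h : 1 / √5 ≤ 1 / 2 := one_div_le_one_div_of_le two_pos (le_sqrt_of_sq_le (by norm_num))
  linarith

lemma cos_sq_mul_sub_sin_sq_mul {c s : ℝ} (hc : c ^ 2 = 1 / 2 + 1 / √5)
    (hs : s ^ 2 = 1 - (1 / 2 + 1 / √5)) :
    c ^ 2 * ((√5 - 1) / 2) - s ^ 2 * ((√5 + 1) / 2) = 1 / 2 := by
  have h5 : √5 ≠ 0 := by positivity
  rw [hc, hs]
  field_simp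
  ring

theorem stmt_11 (θ : ℝ) (hθ : θ = Real.arccos (Real.sqrt (1 / 2 + 1 / Real.sqrt 5)))
    (A₀ B₀ : Fin 2 → ℝ)
    (hA₀ : A₀ = ![Real.cos θ, Real.sin θ])
    (hB₀ : B₀ = ![Real.cos θ, -Real.sin θ])
    (Au : Fin 2 × Fin 2 → ℝ)
    (hAu : Au = fun p =>
      if p = (0, 0) then (1 / Real.sqrt 3) * ((Real.sqrt 5 - 1) / 2)
      else if p = (1, 1) then (1 / Real.sqrt 3) * ((Real.sqrt 5 + 1) / 2)
      else 0) :
    (∑ p : Fin 2 × Fin 2, A₀ p.1 * B₀ p.2 * Au p) ^ 2 = 1 / 12 := by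
  have hx₀ : (0 : ℝ) ≤ 1 / 2 + 1 / √5 := by positivity
  have hc := cos_sq_arccos_sqrt hx₀ half_add_inv_sqrt_five_le_one
  have hs := sin_sq_arccos_sqrt hx₀ half_add_inv_sqrt_five_le_one
  rw [← hθ] at hc hs
  have amplitude : ∑ p : Fin 2 × Fin 2, A₀ p.1 * B₀ p.2 * Au p = 1 / √3 * (1 / 2) := by
    rw [← cos_sq_mul_sub_sin_sq_mul hc hs, hA₀, hB₀, hAu, sum_prod_fin_two_mul_diag]
    simp only [Matrix.cons_val_zero, Matrix.cons_val_one]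
    ring
  rw [amplitude, mul_pow, div_pow, sq_sqrt (by norm_num : (0 : ℝ) ≤ 3)]
  norm_num
end

section
/- Fix ℓ, h with 0 ≤ ℓ ≤ 1/4 ≤ h ≤ 1 and set ℓ' = max(ℓ, 1 − 3h). For every measurement dependent local full distribution P on {0,1}^4 (P(a,b,x,y) = ∑_λ ρ(λ) q_λ(x,y) α_λ(a,x) β_λ(b,y), with ℓ ≤ q_λ(x,y) ≤ h), the full-probability CHSH expression ∑_{a,b,x,y} (−1)^{a+b+x·y} P(a,b,x,y) is at most 1 − 2ℓ'. -/
/-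
For each hidden variable λ, write A_x = α_λ(0,x) - α_λ(1,x) and B_y = β_λ(0,y) - β_λ(1,y); these
correlators lie in [-1, 1], and the CHSH expression is the ρ-average of
  ∑_{x,y} (-1)^{xy} q_λ(x,y) A_x B_y = A_0 (q₀₀ B_0 + q₀₁ B_1) + A_1 (q₁₀ B_0 - q₁₁ B_1).
Maximising over A bounds this by |q₀₀ B_0 + q₀₁ B_1| + |q₁₀ B_0 - q₁₁ B_1|, which is at most
1 - 2m whenever every q_λ(x,y) ≥ m ≥ 0: one of the two absolute values is taken of a difference,
and |s - t| ≤ s + t - 2m.  Finally q_λ(x,y) ≥ ℓ directly and q_λ(x,y) ≥ 1 - 3h because the other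
three weights are at most h.
-/

def chshValue (q : Fin 2 → Fin 2 → ℝ) (A B : Fin 2 → ℝ) : ℝ :=
  ∑ x : Fin 2, ∑ y : Fin 2, (-1 : ℝ) ^ ((x : ℕ) * (y : ℕ)) * q x y * A x * B y

lemma mul_le_abs_of_abs_le_one {u : ℝ} (hu : |u| ≤ 1) (s : ℝ) : u * s ≤ |s| :=
  calc u * s ≤ |u * s| := le_abs_self _
    _ = |u| * |s| := abs_mul _ _
    _ ≤ |s| := mul_le_of_le_one_left (abs_nonneg _) hu

lemma abs_add_abs_sub_le {m a b c d u v : ℝ} (hm : 0 ≤ m)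
    (ha : m ≤ a) (hb : m ≤ b) (hc : m ≤ c) (hd : m ≤ d) (hsum : a + b + c + d = 1)
    (hu : |u| ≤ 1) (hv : |v| ≤ 1) :
    |a * u + b * v| + |c * u - d * v| ≤ 1 - 2 * m := by
  obtain ⟨hu₁, hu₂⟩ := abs_le.mp hu
  obtain ⟨hv₁, hv₂⟩ := abs_le.mp hv
  rcases abs_cases (a * u + b * v) with ⟨e₁, -⟩ | ⟨e₁, -⟩ <;>
    rcases abs_cases (c * u - d * v) with ⟨e₂, -⟩ | ⟨e₂, -⟩ <;>
    rw [e₁, e₂] <;>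
    nlinarith

lemma chshValue_le {m : ℝ} {q : Fin 2 → Fin 2 → ℝ} {A B : Fin 2 → ℝ} (hm : 0 ≤ m)
    (hq : ∀ x y, m ≤ q x y) (hqsum : ∑ x : Fin 2, ∑ y : Fin 2, q x y = 1)
    (hA : ∀ x, |A x| ≤ 1) (hB : ∀ y, |B y| ≤ 1) :
    chshValue q A B ≤ 1 - 2 * m := by
  simp only [Fin.sum_univ_two] at hqsum
  have hsplit : chshValue q A B =
      A 0 * (q 0 0 * B 0 + q 0 1 * B 1) + A 1 * (q 1 0 * B 0 - q 1 1 * B 1) := by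
    simp only [chshValue, Fin.sum_univ_two, Fin.val_zero, Fin.val_one]
    ring
  calc chshValue q A B
      ≤ |q 0 0 * B 0 + q 0 1 * B 1| + |q 1 0 * B 0 - q 1 1 * B 1| := by
        rw [hsplit]
        exact add_le_add (mul_le_abs_of_abs_le_one (hA 0) _) (mul_le_abs_of_abs_le_one (hA 1) _)
    _ ≤ 1 - 2 * m :=
        abs_add_abs_sub_le hm (hq 0 0) (hq 0 1) (hq 1 0) (hq 1 1) (by linarith) (hB 0) (hB 1)

lemma abs_sub_le_one_of_sum_eq_one {p : Fin 2 → ℝ} (hp : ∀ i, 0 ≤ p i) (hsum : ∑ i, p i = 1) :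
    |p 0 - p 1| ≤ 1 := by
  rw [Fin.sum_univ_two] at hsum
  exact abs_sub_le_of_nonneg_of_le (hp 0) (by linarith [hp 1]) (hp 1) (by linarith [hp 0])

lemma one_sub_three_mul_le_of_sum_eq_one {h : ℝ} {q : Fin 2 → Fin 2 → ℝ} (hq : ∀ x y, q x y ≤ h)
    (hsum : ∑ x : Fin 2, ∑ y : Fin 2, q x y = 1) : ∀ x y, 1 - 3 * h ≤ q x y := by
  simp only [Fin.sum_univ_two] at hsum
  have := hq 0 0; have := hq 0 1; have := hq 1 0; have := hq 1 1
  simp only [Fin.forall_fin_two]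
  refine ⟨⟨?_, ?_⟩, ?_, ?_⟩ <;> linarith

lemma chsh_sum_eq_sum_chshValue (Λ : Finset ℕ) (ρ : ℕ → ℝ) (q α β : ℕ → Fin 2 → Fin 2 → ℝ) :
    (∑ a : Fin 2, ∑ b : Fin 2, ∑ x : Fin 2, ∑ y : Fin 2,
        (-1 : ℝ) ^ ((a : ℕ) + (b : ℕ) + (x : ℕ) * (y : ℕ)) *
          ∑ l ∈ Λ, ρ l * q l x y * α l a x * β l b y) =
      ∑ l ∈ Λ, ρ l * chshValue (q l) (fun x => α l 0 x - α l 1 x) (fun y => β l 0 y - β l 1 y) := by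
  simp only [chshValue, Fin.sum_univ_two, Fin.val_zero, Fin.val_one, Finset.mul_sum,
    ← Finset.sum_add_distrib]
  refine Finset.sum_congr rfl fun l _ => ?_
  ring

theorem stmt_12_general (ℓ h : ℝ) (hℓ0 : 0 ≤ ℓ)
    (Λ : Finset ℕ) (ρ : ℕ → ℝ)
    (q : ℕ → Fin 2 → Fin 2 → ℝ)
    (α β : ℕ → Fin 2 → Fin 2 → ℝ)
    (hρ0 : ∀ l ∈ Λ, 0 ≤ ρ l) (hρ1 : ∑ l ∈ Λ, ρ l = 1)
    (hqbd : ∀ l ∈ Λ, ∀ x y, ℓ ≤ q l x y ∧ q l x y ≤ h)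
    (hqsum : ∀ l ∈ Λ, ∑ x : Fin 2, ∑ y : Fin 2, q l x y = 1)
    (hα0 : ∀ l ∈ Λ, ∀ a x, 0 ≤ α l a x)
    (hα1 : ∀ l ∈ Λ, ∀ x, ∑ a : Fin 2, α l a x = 1)
    (hβ0 : ∀ l ∈ Λ, ∀ b y, 0 ≤ β l b y)
    (hβ1 : ∀ l ∈ Λ, ∀ y, ∑ b : Fin 2, β l b y = 1)
    (P : Fin 2 → Fin 2 → Fin 2 → Fin 2 → ℝ)
    (hP : ∀ a b x y, P a b x y = ∑ l ∈ Λ, ρ l * q l x y * α l a x * β l b y) :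
    (∑ a : Fin 2, ∑ b : Fin 2, ∑ x : Fin 2, ∑ y : Fin 2,
        (-1 : ℝ) ^ ((a : ℕ) + (b : ℕ) + (x : ℕ) * (y : ℕ)) * P a b x y) ≤
      1 - 2 * max ℓ (1 - 3 * h) := by
  simp only [hP, chsh_sum_eq_sum_chshValue]
  calc _ ≤ ∑ l ∈ Λ, ρ l * (1 - 2 * max ℓ (1 - 3 * h)) := by
        refine Finset.sum_le_sum fun l hl => mul_le_mul_of_nonneg_left ?_ (hρ0 l hl)
        refine chshValue_le (hℓ0.trans (le_max_left _ _))
          (fun x y => max_le (hqbd l hl x y).1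
            (one_sub_three_mul_le_of_sum_eq_one (fun x y => (hqbd l hl x y).2) (hqsum l hl) x y))
          (hqsum l hl) ?_ ?_
        · exact fun x => abs_sub_le_one_of_sum_eq_one (fun a => hα0 l hl a x) (hα1 l hl x)
        · exact fun y => abs_sub_le_one_of_sum_eq_one (fun b => hβ0 l hl b y) (hβ1 l hl y)
    _ = 1 - 2 * max ℓ (1 - 3 * h) := by rw [← Finset.sum_mul, hρ1, one_mul]

theorem stmt_12 (ℓ h : ℝ) (hℓ0 : 0 ≤ ℓ) (hℓ : ℓ ≤ 1 / 4) (hh : 1 / 4 ≤ h) (hh1 : h ≤ 1)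
    (Λ : Finset ℕ) (ρ : ℕ → ℝ)
    (q : ℕ → Fin 2 → Fin 2 → ℝ)
    (α β : ℕ → Fin 2 → Fin 2 → ℝ)
    (hρ0 : ∀ l ∈ Λ, 0 ≤ ρ l) (hρ1 : ∑ l ∈ Λ, ρ l = 1)
    (hqbd : ∀ l ∈ Λ, ∀ x y, ℓ ≤ q l x y ∧ q l x y ≤ h)
    (hqsum : ∀ l ∈ Λ, ∑ x : Fin 2, ∑ y : Fin 2, q l x y = 1)
    (hα0 : ∀ l ∈ Λ, ∀ a x, 0 ≤ α l a x)
    (hα1 : ∀ l ∈ Λ, ∀ x, ∑ a : Fin 2, α l a x = 1)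
    (hβ0 : ∀ l ∈ Λ, ∀ b y, 0 ≤ β l b y)
    (hβ1 : ∀ l ∈ Λ, ∀ y, ∑ b : Fin 2, β l b y = 1)
    (P : Fin 2 → Fin 2 → Fin 2 → Fin 2 → ℝ)
    (hP : ∀ a b x y, P a b x y = ∑ l ∈ Λ, ρ l * q l x y * α l a x * β l b y) :
    (∑ a : Fin 2, ∑ b : Fin 2, ∑ x : Fin 2, ∑ y : Fin 2,
        (-1 : ℝ) ^ ((a : ℕ) + (b : ℕ) + (x : ℕ) * (y : ℕ)) * P a b x y) ≤
      1 - 2 * max ℓ (1 - 3 * h) :=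
  stmt_12_general ℓ h hℓ0 Λ ρ q α β hρ0 hρ1 hqbd hqsum hα0 hα1 hβ0 hβ1 P hP
end

section
/- Fix ℓ, h with 0 ≤ ℓ < 1/4 < h ≤ 1, ℓ' = max(ℓ, 1 − 3h). There exists a measurement dependent local distribution P on {0,1}^4 (of the form P(a,b,x,y) = ∑_λ ρ(λ) q_λ(x,y) α_λ(a,x) β_λ(b,y) with ℓ ≤ q_λ(x,y) ≤ h and deterministic α_λ, β_λ) which is nonsignaling, has uniform marginal inputs P(x,y) := ∑_{a,b} P(a,b,x,y) = 1/4 for all x,y, and achieves ∑_{a,b,x,y} (−1)^{a+b+x·y} P(a,b,x,y) = 1 − 2ℓ', so that the conditional CHSH value ∑_{abxy}(−1)^{a+b+xy} P(ab|xy) equals 4(1 − 2ℓ'). -/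
/-!
Each hidden variable `((x₀, y₀), r)` fixes a deterministic strategy `α(x) = r + (1 + y₀) x`,
`β(y) = r + (1 + x₀)(1 + y₀ + y)` (mod 2) which wins the CHSH game, `α(x) + β(y) = x y`, at every
input pair except `(x₀, y₀)`. Choosing the inputs with probability `m = max ℓ (1 - 3h)` at
`(x₀, y₀)` and `(1 - m)/3` at the three other pairs keeps `q` within `[ℓ, h]` and gives every
vertex the CHSH value `3 · (1 - m)/3 - m = 1 - 2m`. The uniform mixture over the eight hidden
variables is nonsignaling with uniform inputs: for fixed `(x₀, y₀)` the shared bit `r` makes each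
output uniform, and for fixed inputs the weights `q` sum to `1` over the loss pairs `(x₀, y₀)`,
so every one-sided marginal `P(a, x, y)` and `P(b, x, y)` equals `1/8`.
-/

open Finset

section MeasurementDependentLocal

variable {L : Type*}

def mdlCorrelation (Λ : Finset L) (ρ : L → ℝ) (q : L → Fin 2 → Fin 2 → ℝ)
    (α β : L → Fin 2 → Fin 2) (a b x y : Fin 2) : ℝ :=
  ∑ l ∈ Λ, ρ l * q l x y * (if α l x = a then 1 else 0) * (if β l y = b then 1 else 0)

variable (Λ : Finset L) (ρ : L → ℝ) (q : L → Fin 2 → Fin 2 → ℝ) (α β : L → Fin 2 → Fin 2)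

theorem sum_mdlCorrelation_right (a x y : Fin 2) :
    ∑ b, mdlCorrelation Λ ρ q α β a b x y =
      ∑ l ∈ Λ, ρ l * q l x y * if α l x = a then 1 else 0 := by
  simp only [mdlCorrelation]
  rw [sum_comm]
  simp only [← mul_sum, Fintype.sum_ite_eq, mul_one]

theorem sum_mdlCorrelation_left (b x y : Fin 2) :
    ∑ a, mdlCorrelation Λ ρ q α β a b x y =
      ∑ l ∈ Λ, ρ l * q l x y * if β l y = b then 1 else 0 := by
  simp only [mdlCorrelation]
  rw [sum_comm]
  simp only [← sum_mul, ← mul_sum, Fintype.sum_ite_eq, mul_one]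

theorem sum_mul_mdlCorrelation (f : Fin 2 → Fin 2 → Fin 2 → Fin 2 → ℝ) :
    ∑ a, ∑ b, ∑ x, ∑ y, f a b x y * mdlCorrelation Λ ρ q α β a b x y =
      ∑ l ∈ Λ, ρ l * ∑ x, ∑ y, f (α l x) (β l y) x y * q l x y := by
  simp only [mdlCorrelation, mul_sum, sum_comm (s := (univ : Finset (Fin 2))) (t := Λ)]
  refine sum_congr rfl fun l _ => ?_
  rw [sum_comm_cycle]
  refine sum_congr rfl fun x _ => ?_
  rw [sum_comm_cycle]
  refine sum_congr rfl fun y _ => ?_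
  simp only [mul_ite, mul_one, mul_zero, Fintype.sum_ite_eq]
  ring

theorem mdlCorrelation_comp_invFun_encode [Encodable L] [Nonempty L] :
    mdlCorrelation (Λ.map (Encodable.encode' L)) (ρ ∘ Function.invFun Encodable.encode)
        (q ∘ Function.invFun Encodable.encode) (α ∘ Function.invFun Encodable.encode)
        (β ∘ Function.invFun Encodable.encode) = mdlCorrelation Λ ρ q α β := by
  have hdecode : ∀ l, Function.invFun Encodable.encode (Encodable.encode' L l) = l :=
    Function.leftInverse_invFun Encodable.encode_injective
  ext a b x y
  simp only [mdlCorrelation, sum_map, Function.comp_apply, hdecode]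

end MeasurementDependentLocal

theorem sum_ite_eq_add_card_sub_one_mul {ι : Type*} [Fintype ι] [DecidableEq ι] (i₀ : ι)
    (u c : ℝ) : ∑ i, (if i = i₀ then u else c) = u + (Fintype.card ι - 1) * c := by
  have h : ∀ i, (if i = i₀ then u else c) = c + if i = i₀ then u - c else 0 := by
    intro i; split_ifs <;> ring
  simp only [h, sum_add_distrib, sum_const, card_univ, nsmul_eq_mul, Fintype.sum_ite_eq']
  ring

theorem sum_ite_add_right_eq {G : Type*} [AddGroup G] [Fintype G] [DecidableEq G] (c a : G) :
    ∑ r : G, (if r + c = a then (1 : ℝ) else 0) = 1 :=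
  (Equiv.sum_comp (Equiv.addRight c) (fun s => if s = a then (1 : ℝ) else 0)).trans
    (Fintype.sum_ite_eq' a _)

noncomputable def lossWeight (m : ℝ) (p₀ p : Fin 2 × Fin 2) : ℝ :=
  if p = p₀ then m else (1 - m) / 3

theorem sum_lossWeight_left (m : ℝ) (p : Fin 2 × Fin 2) : ∑ p₀, lossWeight m p₀ p = 1 := by
  simp only [lossWeight, eq_comm (a := p), sum_ite_eq_add_card_sub_one_mul]
  norm_num; ring

theorem sum_lossWeight_right (m : ℝ) (p₀ : Fin 2 × Fin 2) : ∑ p, lossWeight m p₀ p = 1 := by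
  simp only [lossWeight, sum_ite_eq_add_card_sub_one_mul]
  norm_num; ring

theorem sum_sign_mul_lossWeight (m : ℝ) (p₀ : Fin 2 × Fin 2) :
    ∑ p, (if p = p₀ then -1 else 1) * lossWeight m p₀ p = 1 - 2 * m := by
  simp only [lossWeight, ite_mul_ite, sum_ite_eq_add_card_sub_one_mul]
  norm_num; ring

theorem lossWeight_max_mem_Icc {ℓ h : ℝ} (hℓ : ℓ < 1 / 4) (hh : 1 / 4 < h)
    (p₀ p : Fin 2 × Fin 2) : lossWeight (max ℓ (1 - 3 * h)) p₀ p ∈ Set.Icc ℓ h := by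
  have hm : max ℓ (1 - 3 * h) < 1 / 4 := max_lt hℓ (by linarith)
  unfold lossWeight
  split_ifs
  · exact ⟨le_max_left _ _, max_le (by linarith) (by linarith)⟩
  · constructor <;> linarith [le_max_right ℓ (1 - 3 * h)]

-- `((x₀, y₀), r)`: the one input pair at which the strategy loses, and a shared random bit.
abbrev HiddenVar := (Fin 2 × Fin 2) × Fin 2

def alice (t : HiddenVar) (x : Fin 2) : Fin 2 := t.2 + (1 + t.1.2) * x

def bob (t : HiddenVar) (y : Fin 2) : Fin 2 := t.2 + (1 + t.1.1) * (1 + t.1.2 + y)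

theorem alice_add_bob_add_mul (t : HiddenVar) (x y : Fin 2) :
    alice t x + bob t y + x * y = if (x, y) = t.1 then 1 else 0 := by
  obtain ⟨⟨x₀, y₀⟩, r⟩ := t
  fin_cases x₀ <;> fin_cases y₀ <;> fin_cases r <;> fin_cases x <;> fin_cases y <;> decide

theorem neg_one_pow_val_add_val_add_val_mul (a b x y : Fin 2) :
    (-1 : ℝ) ^ ((a : ℕ) + (b : ℕ) + (x : ℕ) * (y : ℕ)) = (-1) ^ ((a + b + x * y : Fin 2) : ℕ) := by
  rw [neg_one_pow_eq_pow_mod_two, Fin.val_add, Fin.val_add, Fin.val_mul]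
  simp [Nat.add_mod, Nat.mul_mod]

theorem neg_one_pow_alice_add_bob_add_mul (t : HiddenVar) (x y : Fin 2) :
    (-1 : ℝ) ^ ((alice t x : ℕ) + (bob t y : ℕ) + (x : ℕ) * (y : ℕ)) =
      if (x, y) = t.1 then -1 else 1 := by
  rw [neg_one_pow_val_add_val_add_val_mul, alice_add_bob_add_mul]
  split_ifs <;> simp

theorem sum_ite_alice_eq (p : Fin 2 × Fin 2) (x a : Fin 2) :
    ∑ r, (if alice (p, r) x = a then (1 : ℝ) else 0) = 1 :=
  sum_ite_add_right_eq _ a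

theorem sum_ite_bob_eq (p : Fin 2 × Fin 2) (y b : Fin 2) :
    ∑ r, (if bob (p, r) y = b then (1 : ℝ) else 0) = 1 :=
  sum_ite_add_right_eq _ b

noncomputable def qModel (m : ℝ) (t : HiddenVar) (x y : Fin 2) : ℝ := lossWeight m t.1 (x, y)

noncomputable def chshModel (m : ℝ) : Fin 2 → Fin 2 → Fin 2 → Fin 2 → ℝ :=
  mdlCorrelation univ (fun _ => 1 / 8) (qModel m) alice bob

theorem sum_chshModel_right (m : ℝ) (a x y : Fin 2) : ∑ b, chshModel m a b x y = 1 / 8 := by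
  rw [chshModel, sum_mdlCorrelation_right, Fintype.sum_prod_type]
  simp only [qModel, ← mul_sum, sum_ite_alice_eq, mul_one, sum_lossWeight_left]

theorem sum_chshModel_left (m : ℝ) (b x y : Fin 2) : ∑ a, chshModel m a b x y = 1 / 8 := by
  rw [chshModel, sum_mdlCorrelation_left, Fintype.sum_prod_type]
  simp only [qModel, ← mul_sum, sum_ite_bob_eq, mul_one, sum_lossWeight_left]

theorem chsh_chshModel (m : ℝ) :
    ∑ a : Fin 2, ∑ b : Fin 2, ∑ x : Fin 2, ∑ y : Fin 2,
      (-1 : ℝ) ^ ((a : ℕ) + (b : ℕ) + (x : ℕ) * (y : ℕ)) * chshModel m a b x y = 1 - 2 * m := by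
  rw [chshModel, sum_mul_mdlCorrelation]
  simp only [neg_one_pow_alice_add_bob_add_mul, qModel]
  simp only [← Fintype.sum_prod_type', sum_sign_mul_lossWeight, sum_const, card_univ]
  norm_num
  ring

theorem stmt_13_general (ℓ h : ℝ) (hℓ : ℓ < 1 / 4) (hh : 1 / 4 < h) :
    ∃ (Λ : Finset ℕ) (ρ : ℕ → ℝ)
      (q : ℕ → Fin 2 → Fin 2 → ℝ)
      (α β : ℕ → Fin 2 → Fin 2)  -- deterministic local responses
      (P : Fin 2 → Fin 2 → Fin 2 → Fin 2 → ℝ),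
      (∀ l ∈ Λ, 0 ≤ ρ l) ∧ (∑ l ∈ Λ, ρ l = 1) ∧
      (∀ l ∈ Λ, ∀ x y, ℓ ≤ q l x y ∧ q l x y ≤ h) ∧
      (∀ l ∈ Λ, ∑ x : Fin 2, ∑ y : Fin 2, q l x y = 1) ∧
      (∀ a b x y, P a b x y = ∑ l ∈ Λ, ρ l * q l x y *
        (if α l x = a then (1:ℝ) else 0) * (if β l y = b then (1:ℝ) else 0)) ∧
      -- uniform observed inputs
      (∀ x y, ∑ a : Fin 2, ∑ b : Fin 2, P a b x y = 1 / 4) ∧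
      -- nonsignaling
      (∀ a x y y', ∑ b : Fin 2, P a b x y = ∑ b : Fin 2, P a b x y') ∧
      (∀ b x x' y, ∑ a : Fin 2, P a b x y = ∑ a : Fin 2, P a b x' y) ∧
      -- full-probability CHSH value
      (∑ a : Fin 2, ∑ b : Fin 2, ∑ x : Fin 2, ∑ y : Fin 2,
          (-1 : ℝ) ^ ((a : ℕ) + (b : ℕ) + (x : ℕ) * (y : ℕ)) * P a b x y) =
        1 - 2 * max ℓ (1 - 3 * h) ∧
      -- conditional CHSH value
      (∑ a : Fin 2, ∑ b : Fin 2, ∑ x : Fin 2, ∑ y : Fin 2,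
          (-1 : ℝ) ^ ((a : ℕ) + (b : ℕ) + (x : ℕ) * (y : ℕ)) * (P a b x y / (1 / 4))) =
        4 * (1 - 2 * max ℓ (1 - 3 * h)) := by
  set m := max ℓ (1 - 3 * h)
  set decode := Function.invFun (Encodable.encode : HiddenVar → ℕ)
  have hP : mdlCorrelation (univ.map (Encodable.encode' HiddenVar)) (fun _ => 1 / 8)
      (qModel m ∘ decode) (alice ∘ decode) (bob ∘ decode) = chshModel m :=
    mdlCorrelation_comp_invFun_encode univ (fun _ => 1 / 8) (qModel m) alice bob
  refine ⟨univ.map (Encodable.encode' HiddenVar), fun _ => 1 / 8, qModel m ∘ decode,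
    alice ∘ decode, bob ∘ decode, chshModel m, fun _ _ => by norm_num, by simp,
    fun _ _ _ _ => lossWeight_max_mem_Icc hℓ hh _ _,
    fun _ _ => by rw [← Fintype.sum_prod_type']; exact sum_lossWeight_right _ _,
    fun a b x y => by rw [← hP]; rfl, fun x y => ?_,
    fun a x y y' => by rw [sum_chshModel_right, sum_chshModel_right],
    fun b x x' y => by rw [sum_chshModel_left, sum_chshModel_left], chsh_chshModel m, ?_⟩
  · simp only [sum_chshModel_right, sum_const, card_univ, Fintype.card_fin]
    norm_num
  · simp only [← mul_div_assoc, ← sum_div, chsh_chshModel]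
    ring

theorem stmt_13 (ℓ h : ℝ) (hℓ0 : 0 ≤ ℓ) (hℓ : ℓ < 1 / 4) (hh : 1 / 4 < h) (hh1 : h ≤ 1) :
    ∃ (Λ : Finset ℕ) (ρ : ℕ → ℝ)
      (q : ℕ → Fin 2 → Fin 2 → ℝ)
      (α β : ℕ → Fin 2 → Fin 2)  -- deterministic local responses
      (P : Fin 2 → Fin 2 → Fin 2 → Fin 2 → ℝ),
      (∀ l ∈ Λ, 0 ≤ ρ l) ∧ (∑ l ∈ Λ, ρ l = 1) ∧
      (∀ l ∈ Λ, ∀ x y, ℓ ≤ q l x y ∧ q l x y ≤ h) ∧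
      (∀ l ∈ Λ, ∑ x : Fin 2, ∑ y : Fin 2, q l x y = 1) ∧
      (∀ a b x y, P a b x y = ∑ l ∈ Λ, ρ l * q l x y *
        (if α l x = a then (1:ℝ) else 0) * (if β l y = b then (1:ℝ) else 0)) ∧
      -- uniform observed inputs
      (∀ x y, ∑ a : Fin 2, ∑ b : Fin 2, P a b x y = 1 / 4) ∧
      -- nonsignaling
      (∀ a x y y', ∑ b : Fin 2, P a b x y = ∑ b : Fin 2, P a b x y') ∧
      (∀ b x x' y, ∑ a : Fin 2, P a b x y = ∑ a : Fin 2, P a b x' y) ∧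
      -- full-probability CHSH value
      (∑ a : Fin 2, ∑ b : Fin 2, ∑ x : Fin 2, ∑ y : Fin 2,
          (-1 : ℝ) ^ ((a : ℕ) + (b : ℕ) + (x : ℕ) * (y : ℕ)) * P a b x y) =
        1 - 2 * max ℓ (1 - 3 * h) ∧
      -- conditional CHSH value
      (∑ a : Fin 2, ∑ b : Fin 2, ∑ x : Fin 2, ∑ y : Fin 2,
          (-1 : ℝ) ^ ((a : ℕ) + (b : ℕ) + (x : ℕ) * (y : ℕ)) * (P a b x y / (1 / 4))) =
        4 * (1 - 2 * max ℓ (1 - 3 * h)) :=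
  stmt_13_general ℓ h hℓ hh
end

section
/- With h = 1/3 and ℓ = 0, the input polytope I(0, 1/3) on {0,1}^2 contains all distributions supported on exactly three input pairs with value 1/3 each. Using such input distributions together with deterministic local responses, every vertex of the MDL polytope of the form 'one input pair excluded' is achievable; in particular for any PR-box behavior P_PR(ab|xy) = (1/2)·[a ⊕ b = x·y], there is a measurement dependent local model with ℓ = 0, h = 1/3 and uniform observed inputs reproducing P(a,b,x,y) = (1/4)·P_PR(ab|xy). -/
/-!
Take as hidden variable an input pair `(x₀, y₀)` together with a shared bit `s`. The affine
deterministic strategies `α x = s + (y₀ + 1) x`, `β y = s + (x₀ + 1)(y₀ + 1) + (x₀ + 1) y` over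
`𝔽₂` satisfy `α x + β y + x y = (x + x₀ + 1)(y + y₀ + 1)`, so they win the PR game on every input
pair except `(x₀, y₀)`. Letting the hidden variable choose its inputs uniformly among those three
winning pairs (weight `1/3`) and averaging uniformly over all eight hidden variables makes each
input pair occur with probability `1/4`, and for each such pair the bit `s` makes both winning
output pairs equally likely.
-/

open Finset

section Model

variable {X Y A B Λ Λ' : Type*}

def InputPolytope [Fintype X] [Fintype Y] (ℓ h : ℝ) : Set (X → Y → ℝ) :=
  {p | (∀ x y, ℓ ≤ p x y ∧ p x y ≤ h) ∧ ∑ x, ∑ y, p x y = 1}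

/-- The hidden variable `l` has weight `ρ l`, input distribution `q l = p(xy|λ) ∈ I(ℓ, h)` and
deterministic responses `α l`, `β l`; `pIn` is the observed input distribution and
`P a b x y = P(ab|xy)`. -/
structure IsMDLModel [Fintype X] [Fintype Y] [DecidableEq A] [DecidableEq B] (ℓ h : ℝ)
    (pIn : X → Y → ℝ) (P : A → B → X → Y → ℝ) (s : Finset Λ) (ρ : Λ → ℝ)
    (q : Λ → X → Y → ℝ) (α : Λ → X → A) (β : Λ → Y → B) : Prop where
  weight_nonneg : ∀ l ∈ s, 0 ≤ ρ l
  sum_weight : ∑ l ∈ s, ρ l = 1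
  inputs_mem : ∀ l ∈ s, q l ∈ InputPolytope ℓ h
  marginal : ∀ x y, ∑ l ∈ s, ρ l * q l x y = pIn x y
  reproduces : ∀ a b x y, ∑ l ∈ s, ρ l * q l x y *
    (if α l x = a then (1:ℝ) else 0) * (if β l y = b then (1:ℝ) else 0) = pIn x y * P a b x y

theorem IsMDLModel.map [Fintype X] [Fintype Y] [DecidableEq A] [DecidableEq B] {ℓ h : ℝ}
    {pIn : X → Y → ℝ} {P : A → B → X → Y → ℝ} {s : Finset Λ} {ρ : Λ → ℝ}
    {q : Λ → X → Y → ℝ} {α : Λ → X → A} {β : Λ → Y → B}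
    (hm : IsMDLModel ℓ h pIn P s ρ q α β) (e : Λ ↪ Λ') {g : Λ' → Λ}
    (hg : Function.LeftInverse g e) :
    IsMDLModel ℓ h pIn P (s.map e) (ρ ∘ g) (q ∘ g) (α ∘ g) (β ∘ g) where
  weight_nonneg := by simpa [hg _] using hm.weight_nonneg
  sum_weight := by simpa [hg _] using hm.sum_weight
  inputs_mem := by simpa [hg _] using hm.inputs_mem
  marginal := by simpa [hg _] using hm.marginal
  reproduces := by simpa [hg _] using hm.reproduces

end Model

theorem Fintype.sum_ite_eq_zero_else_const {ι : Type*} [Fintype ι] [DecidableEq ι] (i₀ : ι)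
    (c : ℝ) :
    ∑ i, (if i = i₀ then 0 else c) = (Fintype.card ι - 1) * c := by
  rw [Finset.sum_ite, Finset.sum_const_zero, zero_add, Finset.sum_const, Finset.filter_ne',
    Finset.card_erase_of_mem (Finset.mem_univ _), nsmul_eq_mul, Finset.card_univ,
    Nat.cast_sub (Fintype.card_pos_iff.2 ⟨i₀⟩), Nat.cast_one]

noncomputable section

def prBox (a b x y : Fin 2) : ℝ := if a + b = x * y then 1 / 2 else 0

def excludedInputs (x₀ y₀ : Fin 2) : Fin 2 → Fin 2 → ℝ :=
  fun x y => if (x, y) = (x₀, y₀) then 0 else 1 / 3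

lemma sum_excludedInputs (x₀ y₀ : Fin 2) :
    ∑ p : Fin 2 × Fin 2, excludedInputs x₀ y₀ p.1 p.2 = 1 := by
  simp only [excludedInputs, Prod.mk.eta, Fintype.sum_ite_eq_zero_else_const, Fintype.card_prod,
    Fintype.card_fin]
  norm_num

lemma excludedInputs_mem_inputPolytope (x₀ y₀ : Fin 2) :
    excludedInputs x₀ y₀ ∈ InputPolytope 0 (1 / 3) := by
  refine ⟨fun x y => ?_, ?_⟩
  · unfold excludedInputs; split_ifs <;> norm_num
  · rw [← Fintype.sum_prod_type', sum_excludedInputs]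

lemma sum_excludedInputs_apply (x y : Fin 2) :
    ∑ p : Fin 2 × Fin 2, excludedInputs p.1 p.2 x y = 1 := by
  simp only [excludedInputs, Prod.mk.eta, eq_comm (a := (x, y)),
    Fintype.sum_ite_eq_zero_else_const, Fintype.card_prod, Fintype.card_fin]
  norm_num

/-- An excluded input pair and a shared shift bit. -/
abbrev PRHidden := (Fin 2 × Fin 2) × Fin 2

/-- Chosen so that `prAlice l x + prBob l y + x * y = (x + x₀ + 1) * (y + y₀ + 1)`, where
`l.1 = (x₀, y₀)`. -/
def prAlice (l : PRHidden) (x : Fin 2) : Fin 2 := l.2 + (l.1.2 + 1) * x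

def prBob (l : PRHidden) (y : Fin 2) : Fin 2 := l.2 + (l.1.1 + 1) * (l.1.2 + 1) + (l.1.1 + 1) * y

lemma prAlice_add_prBob_eq_mul_iff (l : PRHidden) (x y : Fin 2) :
    prAlice l x + prBob l y = x * y ↔ (x, y) ≠ l.1 := by
  revert l x y; decide

lemma card_shifts_eq_ite (p : Fin 2 × Fin 2) (a b x y : Fin 2) :
    #{s | prAlice (p, s) x = a ∧ prBob (p, s) y = b} =
      if a + b = prAlice (p, 0) x + prBob (p, 0) y then 1 else 0 := by
  revert p a b x y; decide

lemma excludedInputs_mul_sum_shifts (p : Fin 2 × Fin 2) (a b x y : Fin 2) :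
    excludedInputs p.1 p.2 x y * ∑ s, (if prAlice (p, s) x = a then (1:ℝ) else 0) *
      (if prBob (p, s) y = b then (1:ℝ) else 0) =
    excludedInputs p.1 p.2 x y * if a + b = x * y then 1 else 0 := by
  by_cases hxy : (x, y) = p
  · simp [excludedInputs, hxy]
  · have hwin := (prAlice_add_prBob_eq_mul_iff (p, 0) x y).2 hxy
    simp only [ite_zero_mul_ite_zero, mul_one, sum_boole, card_shifts_eq_ite, hwin,
      Nat.cast_ite, Nat.cast_one, Nat.cast_zero]

theorem isMDLModel_prBox :
    IsMDLModel 0 (1 / 3) (fun _ _ => 1 / 4) prBox (univ : Finset PRHidden) (fun _ => 1 / 8)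
      (fun l => excludedInputs l.1.1 l.1.2) prAlice prBob where
  weight_nonneg _ _ := by norm_num
  sum_weight := by simp
  inputs_mem l _ := excludedInputs_mem_inputPolytope l.1.1 l.1.2
  marginal x y := by
    rw [← mul_sum, Fintype.sum_prod_type, sum_comm]
    simp only [sum_const, card_univ, Fintype.card_fin, sum_excludedInputs_apply]
    norm_num
  reproduces a b x y :=
    calc _ = ∑ p : Fin 2 × Fin 2, 1 / 8 * (excludedInputs p.1 p.2 x y * ∑ s,
          (if prAlice (p, s) x = a then (1:ℝ) else 0) *
            (if prBob (p, s) y = b then (1:ℝ) else 0)) := by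
          rw [Fintype.sum_prod_type]; simp only [mul_sum, mul_assoc]
      _ = ∑ p : Fin 2 × Fin 2,
          1 / 8 * (if a + b = x * y then 1 else 0) * excludedInputs p.1 p.2 x y :=
          sum_congr rfl fun p _ => by rw [excludedInputs_mul_sum_shifts]; ring
      _ = 1 / 4 * prBox a b x y := by
          rw [← mul_sum, sum_excludedInputs_apply, prBox]; split_ifs <;> norm_num

end

theorem stmt_17 :
    -- the input polytope I(0, 1/3) contains every distribution putting weight 1/3
    -- on three input pairs and excluding the remaining one
    (∀ x₀ y₀ : Fin 2,
      (∀ x y : Fin 2, 0 ≤ (if (x, y) = (x₀, y₀) then (0:ℝ) else 1 / 3) ∧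
        (if (x, y) = (x₀, y₀) then (0:ℝ) else 1 / 3) ≤ 1 / 3) ∧
      (∑ x : Fin 2, ∑ y : Fin 2, (if (x, y) = (x₀, y₀) then (0:ℝ) else 1 / 3)) = 1) ∧
    -- an MDL model with ℓ = 0, h = 1/3 and uniform observed inputs that reproduces
    -- the PR box behavior P_PR(ab|xy) = (1/2)·[a ⊕ b = x·y]
    (∃ (Λ : Finset ℕ) (ρ : ℕ → ℝ)
        (q : ℕ → Fin 2 → Fin 2 → ℝ)
        (α β : ℕ → Fin 2 → Fin 2),
      (∀ l ∈ Λ, 0 ≤ ρ l) ∧ (∑ l ∈ Λ, ρ l = 1) ∧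
      (∀ l ∈ Λ, ∀ x y, 0 ≤ q l x y ∧ q l x y ≤ 1 / 3) ∧
      (∀ l ∈ Λ, ∑ x : Fin 2, ∑ y : Fin 2, q l x y = 1) ∧
      -- uniform observed inputs
      (∀ x y : Fin 2, ∑ l ∈ Λ, ρ l * q l x y = 1 / 4) ∧
      (∀ a b x y : Fin 2,
        (∑ l ∈ Λ, ρ l * q l x y *
            (if α l x = a then (1:ℝ) else 0) * (if β l y = b then (1:ℝ) else 0)) =
          1 / 4 * (if a + b = x * y then (1 / 2 : ℝ) else 0))) := by
  refine ⟨excludedInputs_mem_inputPolytope, ?_⟩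
  obtain ⟨weight_nonneg, sum_weight, inputs_mem, marginal, reproduces⟩ :=
    isMDLModel_prBox.map (Encodable.encode' PRHidden)
      (Function.leftInverse_invFun (Encodable.encode' PRHidden).injective)
  exact ⟨_, _, _, _, _, weight_nonneg, sum_weight, fun l hl => (inputs_mem l hl).1,
    fun l hl => (inputs_mem l hl).2, marginal, reproduces⟩
end
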